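/- For every integer j ≥ 0 and every integer k, the number D_{a−b}^j · R^{(j)}(−k) / j! is an integer, where R^{(j)} denotes the j-th derivative of R. -/

import Mathlib

/-- `Dlcm N` is the least common multiple of `1, 2, …, N` (with `Dlcm 0 = 1`). -/
def Dlcm (N : ℕ) : ℕ := (Finset.Icc 1 N).lcm id

/-- `Rup a b t = (t+b)(t+b+1)⋯(t+a-1)/(a-b)!` (for `a ≥ b`). -/
noncomputable def Rup (a b : ℤ) (t : ℝ) : ℝ :=
  (∏ i ∈ Finset.range (a - b).toNat, (t + (b : ℝ) + (i : ℝ))) / ((a - b).toNat.factorial : ℝ)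

open Polynomial Finset

lemma dvd_Dlcm {i n : ℕ} (h1 : 1 ≤ i) (h2 : i ≤ n) : (i:ℤ) ∣ (Dlcm n : ℤ) := by
  exact_mod_cast Int.natCast_dvd_natCast.mpr (Finset.dvd_lcm (by simp [Finset.mem_Icc, h1, h2]))

lemma prod_Icc_int (m : ℕ) : (∏ i ∈ Finset.Icc 1 m, (i : ℤ)) = (m.factorial : ℤ) := by
  induction m with
  | zero => simp
  | succ m ih =>
    rw [Finset.prod_Icc_succ_top (by omega), ih, Nat.factorial_succ]
    push_cast; ring

lemma L1 (n m j : ℕ) (hm : m ≤ n) :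
    (m.factorial : ℤ) ∣ (Dlcm n : ℤ)^j * (∏ i ∈ range m, (X - C (i:ℤ))).coeff j := by
  by_cases hj : m < j
  · have hdeg : (∏ i ∈ range m, (X - C (i:ℤ))).natDegree < j := by
      refine lt_of_le_of_lt (le_trans (Polynomial.natDegree_prod_le _ _) ?_) hj
      have : ∀ i ∈ range m, (X - C (i:ℤ)).natDegree = 1 := fun i _ => natDegree_X_sub_C _
      rw [Finset.sum_congr rfl this, Finset.sum_const, Finset.card_range, smul_eq_mul, mul_one]
    rw [Polynomial.coeff_eq_zero_of_natDegree_lt hdeg]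
    simp
  push_neg at hj
  have hrw : (∏ i ∈ range m, (X - C (i:ℤ))) = ∏ i ∈ range m, (X + C (-(i:ℤ))) := by
    simp [sub_eq_add_neg]
  rw [hrw, Finset.prod_X_add_C_coeff _ _ (by simpa using hj)]
  rw [Finset.mul_sum]
  apply Finset.dvd_sum
  intro t ht
  rw [Finset.mem_powersetCard, Finset.card_range] at ht
  obtain ⟨hts, htc⟩ := ht
  by_cases h0 : 0 ∈ t
  · have : (∏ i ∈ t, (-(i:ℤ))) = 0 := Finset.prod_eq_zero h0 (by simp)
    simp [this]
  rcases Nat.eq_zero_or_pos m with hm0 | hm0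
  · subst hm0
    have : t = ∅ := Finset.subset_empty.mp (by simpa using hts)
    subst this
    exact ⟨(Dlcm n : ℤ)^j, by simp⟩
  rcases Nat.eq_zero_or_pos j with hj0 | hj0
  · subst hj0
    have : t = range m := Finset.eq_of_subset_of_card_le hts (by rw [Finset.card_range]; omega)
    exact absurd (this ▸ h0) (by simp [Finset.mem_range, hm0])
  have hts' : t ⊆ Finset.Icc 1 (m - 1) := by
    intro i hi
    have hir := hts hi
    rw [Finset.mem_range] at hir
    rw [Finset.mem_Icc]
    refine ⟨?_, by omega⟩
    rcases Nat.eq_zero_or_pos i with h | h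
    · exact absurd (h ▸ hi) h0
    · exact h
  set u := Finset.Icc 1 (m - 1) \ t with hu
  have hcardu : u.card = j - 1 := by
    rw [hu, Finset.card_sdiff_of_subset hts', Nat.card_Icc]
    omega
  have hsplit : (m.factorial : ℤ) = (m : ℤ) * ((∏ i ∈ u, (i:ℤ)) * (∏ i ∈ t, (i:ℤ))) := by
    rw [Finset.prod_sdiff hts', prod_Icc_int, ← Nat.mul_factorial_pred hm0.ne']
    push_cast; ring
  have hdvd : ((m:ℤ) * ∏ i ∈ u, (i:ℤ)) ∣ (Dlcm n : ℤ)^j := by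
    have h1 : (m:ℤ) ∣ (Dlcm n : ℤ) := dvd_Dlcm hm0 hm
    have h2 : (∏ i ∈ u, (i:ℤ)) ∣ (Dlcm n:ℤ)^(j-1) := by
      calc (∏ i ∈ u, (i:ℤ)) ∣ ∏ _i ∈ u, (Dlcm n : ℤ) := by
            refine Finset.prod_dvd_prod_of_dvd _ _ (fun i hi => ?_)
            have hi' := Finset.mem_sdiff.mp hi |>.1
            rw [Finset.mem_Icc] at hi'
            exact dvd_Dlcm hi'.1 (by omega)
        _ = (Dlcm n:ℤ)^(j-1) := by rw [Finset.prod_const, hcardu]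
    have hpow : (Dlcm n:ℤ)^j = (Dlcm n:ℤ) * (Dlcm n:ℤ)^(j-1) := by
      rw [← pow_succ']; congr 1; omega
    rw [hpow]
    exact mul_dvd_mul h1 h2
  obtain ⟨e, he⟩ := hdvd
  have hneg : (∏ i ∈ t, (-(i:ℤ))) = (-1)^t.card * ∏ i ∈ t, (i:ℤ) := by
    rw [← Finset.prod_const, ← Finset.prod_mul_distrib]
    simp
  rw [hneg]
  exact ⟨(-1)^t.card * e, by rw [hsplit, he]; ring⟩

lemma descPoch_eval (n : ℕ) (r : ℤ) :
    (descPochhammer ℤ n).eval r = ∏ i ∈ range n, (r - i) := by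
  induction n with
  | zero => simp
  | succ n ih => rw [descPochhammer_succ_eval, ih, prod_range_succ]

lemma prod_sub_eq_choose (n : ℕ) (r : ℤ) :
    (∏ i ∈ range n, (r - i)) = (n.factorial : ℤ) * Ring.choose r n := by
  rw [← descPoch_eval, eval_eq_smeval, Ring.descPochhammer_eq_factorial_smul_choose]
  simp [nsmul_eq_mul]

lemma expandProd (n : ℕ) (c : ℤ) :
    (∏ i ∈ range n, (X + C (c + i)) : ℤ[X]) =
      ∑ m ∈ range (n+1), C ((n.descFactorial (n - m) : ℤ) * Ring.choose (c + n - 1) (n - m)) *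
        ∏ i ∈ range m, (X - C (i:ℤ)) := by
  apply Polynomial.funext
  intro x
  rw [eval_prod, eval_finset_sum]
  simp only [eval_mul, eval_C, eval_prod, eval_add, eval_sub, eval_X]
  have lhs1 : (∏ i ∈ range n, (x + (c + (i:ℤ)))) = ∏ i ∈ range n, ((x + c + n - 1) - i) := by
    rw [← Finset.prod_range_reflect (fun i => x + (c + (i:ℤ))) n]
    refine Finset.prod_congr rfl (fun i hi => ?_)
    have hi' := Finset.mem_range.mp hi
    have : ((n - 1 - i : ℕ) : ℤ) = (n:ℤ) - 1 - i := by omega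
    rw [this]; ring
  rw [lhs1, prod_sub_eq_choose]
  have hx : x + c + (n:ℤ) - 1 = x + (c + n - 1) := by ring
  rw [hx, Ring.add_choose_eq n (Commute.all _ _),
    Finset.Nat.sum_antidiagonal_eq_sum_range_succ_mk, Finset.mul_sum]
  refine Finset.sum_congr rfl (fun m hm => ?_)
  have hmn : m ≤ n := Nat.lt_succ_iff.mp (Finset.mem_range.mp hm)
  rw [prod_sub_eq_choose]
  have hfac : (n.factorial : ℤ) = (n.descFactorial (n - m) : ℤ) * (m.factorial : ℤ) := by
    have := Nat.factorial_mul_descFactorial (Nat.sub_le n m)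
    rw [show n - (n - m) = m by omega] at this
    exact_mod_cast (by rw [← this]; ring)
  rw [hfac]; ring

lemma key (n : ℕ) (c : ℤ) (j : ℕ) :
    (n.factorial : ℤ) ∣ (Dlcm n : ℤ)^j * (∏ i ∈ range n, (X + C (c + i)) : ℤ[X]).coeff j := by
  rw [expandProd, finset_sum_coeff, Finset.mul_sum]
  apply Finset.dvd_sum
  intro m hm
  have hmn : m ≤ n := Nat.lt_succ_iff.mp (Finset.mem_range.mp hm)
  rw [coeff_C_mul]
  obtain ⟨z, hz⟩ := L1 n m j hmn
  refine ⟨Ring.choose (c + n - 1) (n - m) * z, ?_⟩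
  have hfac : (n.factorial : ℤ) = (n.descFactorial (n - m) : ℤ) * (m.factorial : ℤ) := by
    have := Nat.factorial_mul_descFactorial (Nat.sub_le n m)
    rw [show n - (n - m) = m by omega] at this
    exact_mod_cast (by rw [← this]; ring)
  calc (Dlcm n : ℤ)^j * ((n.descFactorial (n - m) : ℤ) * Ring.choose (c + n - 1) (n - m) *
        (∏ i ∈ range m, (X - C (i:ℤ))).coeff j)
      = (n.descFactorial (n - m) : ℤ) * Ring.choose (c + n - 1) (n - m) *
        ((Dlcm n : ℤ)^j * (∏ i ∈ range m, (X - C (i:ℤ))).coeff j) := by ring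
    _ = _ := by rw [hz, hfac]; ring

lemma polyIter (p : ℝ[X]) (j : ℕ) :
    iteratedDeriv j (fun x => p.eval x) = fun x => ((Polynomial.derivative)^[j] p).eval x := by
  induction j with
  | zero => simp [iteratedDeriv_zero]
  | succ j ih =>
    rw [iteratedDeriv_succ, ih]
    funext x
    rw [Function.iterate_succ_apply']
    exact Polynomial.deriv (p := Polynomial.derivative^[j] p)

/-- For integers `a ≥ b`, every `j ≥ 0` and every integer `k`:
`D_{a-b}^j · R^{(j)}(-k)/j! ∈ ℤ`. -/
theorem integral_valued_polynomial_derivatives (a b : ℤ) (hab : b ≤ a) (j : ℕ) (k : ℤ) :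
    ∃ m : ℤ, (Dlcm (a - b).toNat : ℝ) ^ j * iteratedDeriv j (Rup a b) (-(k : ℝ)) /
      (j.factorial : ℝ) = (m : ℝ) := by
  set n := (a - b).toNat with hn
  set Pr : ℝ[X] := C ((n.factorial : ℝ)⁻¹) * ∏ i ∈ range n, (X + C ((b:ℝ) + i)) with hPr
  have h1 : Rup a b = fun t => Pr.eval t := by
    funext t
    simp only [Rup, hPr, eval_mul, eval_C, eval_prod, eval_add, eval_X, ← hn]
    rw [div_eq_mul_inv, mul_comm]
    congr 1
    exact Finset.prod_congr rfl (fun i _ => by ring)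
  set Qz : ℤ[X] := ∏ i ∈ range n, (X + C ((b - k) + i)) with hQz
  have h5 : taylor (-(k:ℝ)) Pr = C ((n.factorial : ℝ)⁻¹) *
      ∏ i ∈ range n, (X + C (((b - k : ℤ) : ℝ) + i)) := by
    rw [taylor_apply, mul_comp, C_comp, Polynomial.prod_comp]
    congr 1
    refine Finset.prod_congr rfl (fun i _ => ?_)
    rw [add_comp, X_comp, C_comp, add_assoc, ← C_add]
    congr 1
    push_cast
    ring
  have h6 : Qz.map (Int.castRingHom ℝ) = ∏ i ∈ range n, (X + C (((b - k : ℤ) : ℝ) + i)) := by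
    rw [hQz, Polynomial.map_prod]
    refine Finset.prod_congr rfl (fun i _ => ?_)
    rw [Polynomial.map_add, Polynomial.map_X, Polynomial.map_C]
    congr 1
    simp only [Int.coe_castRingHom]
    push_cast
    ring
  have e3 : (hasseDeriv j Pr).eval (-(k:ℝ)) =
      (n.factorial : ℝ)⁻¹ * ((Qz.coeff j : ℤ) : ℝ) := by
    rw [← taylor_coeff, h5, coeff_C_mul, ← h6, coeff_map]
    simp
  have e2 : (Polynomial.derivative)^[j] Pr = j.factorial • hasseDeriv j Pr := by
    rw [← Polynomial.factorial_smul_hasseDeriv]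
    rfl
  obtain ⟨z, hz⟩ := key n (b - k) j
  rw [← hQz] at hz
  refine ⟨z, ?_⟩
  have e1 : iteratedDeriv j (Rup a b) (-(k:ℝ)) =
      (j.factorial : ℝ) * ((n.factorial : ℝ)⁻¹ * ((Qz.coeff j : ℤ) : ℝ)) := by
    rw [h1, polyIter, e2]
    rw [← e3]
    simp [eval_smul, nsmul_eq_mul]
  rw [e1]
  have hjne : (j.factorial : ℝ) ≠ 0 := Nat.cast_ne_zero.mpr (Nat.factorial_ne_zero j)
  have hnne : (n.factorial : ℝ) ≠ 0 := Nat.cast_ne_zero.mpr (Nat.factorial_ne_zero n)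
  have hzR : ((Dlcm n : ℝ))^j * ((Qz.coeff j : ℤ) : ℝ) = (n.factorial : ℝ) * (z : ℝ) := by
    exact_mod_cast congrArg (fun x : ℤ => (x : ℝ)) hz
  field_simp
  linear_combination hzR
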